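/- arXiv:1604.05359 — 3 statements merged into one kernel-verified Lean document; each statement's English description precedes it below -/
import Mathlib

section
/- For every integer j ≥ 1 and every integer m ≥ 0, the value (1/j) · ∑_{d ∣ j} μ(d) m^{j/d} is a nonnegative integer. -/
open Polynomial Finset

/-- The j-th necklace polynomial M_j(z) = (1/j) ∑_{d ∣ j} μ(d) z^{j/d} in ℚ[z]. -/
noncomputable def necklace (j : ℕ) : Polynomial ℚ :=
  Polynomial.C (1 / (j : ℚ)) *
    ∑ d ∈ j.divisors, Polynomial.C ((ArithmeticFunction.moebius d : ℤ) : ℚ) *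
      Polynomial.X ^ (j / d)

/-!
Let `S(x, n) = ∑_{d ∣ n} μ(d) x^{n/d}`. If `n = p^(k+1) r` with `p ∤ r`, the only divisors with
nonzero Möbius value are `e` and `p e` for `e ∣ r`, so `S(x, n)` is a sum of terms
`μ(e) (y^(p^(k+1)) - y^(p^k))` with `y = x^(r/e)`, each divisible by `p^(k+1)` by Fermat's little
theorem lifted along the tower of `p`-th powers. Hence `n ∣ S(x, n)`.
For `m ≥ 2` the term `m^n` dominates, because `∑_{d ∣ n, d < n} m^d < m^n`; for `m = 0` the sum
vanishes and for `m = 1` it is `∑_{d ∣ n} μ(d) ∈ {0, 1}`.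
-/

open ArithmeticFunction ArithmeticFunction.Moebius

theorem Nat.Coprime.sum_divisors_mul_eq_sum_sum {M : Type*} [AddCommMonoid M] {a b : ℕ}
    (hab : a.Coprime b) (f : ℕ → M) :
    ∑ d ∈ (a * b).divisors, f d = ∑ i ∈ a.divisors, ∑ e ∈ b.divisors, f (i * e) := by
  rw [hab.divisors_mul, sum_map]
  exact (sum_attach (divisors a ×ˢ divisors b) (fun q => f (q.1 * q.2))).trans (sum_product ..)

theorem Int.prime_pow_succ_dvd_pow_sub_pow {p : ℕ} (hp : p.Prime) (k : ℕ) (x : ℤ) :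
    (p : ℤ) ^ (k + 1) ∣ x ^ p ^ (k + 1) - x ^ p ^ k := by
  simpa [← pow_mul, ← pow_succ'] using dvd_sub_pow_of_dvd_sub (Int.prime_dvd_pow_self_sub hp x) k

theorem Nat.sum_divisors_pow_div_lt {m n : ℕ} (hm : 2 ≤ m) (hn : n ≠ 0) :
    ∑ d ∈ n.divisors, m ^ (n / d) < 2 * m ^ n := by
  rw [Nat.sum_div_divisors n (m ^ ·), ← Nat.cons_self_properDivisors hn, sum_cons]
  have := Nat.geomSum_lt (n := n) hm fun d hd => (Nat.mem_properDivisors.1 hd).2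
  omega

def necklaceSum (x : ℤ) (n : ℕ) : ℤ :=
  ∑ d ∈ n.divisors, μ d * x ^ (n / d)

theorem necklaceSum_prime_pow_mul {p r : ℕ} (hp : p.Prime) (hpr : ¬p ∣ r) (k : ℕ) (x : ℤ) :
    necklaceSum x (p ^ (k + 1) * r) =
      ∑ e ∈ r.divisors, μ e * (x ^ (p ^ (k + 1) * (r / e)) - x ^ (p ^ k * (r / e))) := by
  rw [necklaceSum, ((hp.coprime_iff_not_dvd.2 hpr).pow_left _).sum_divisors_mul_eq_sum_sum,
    Nat.sum_divisors_prime_pow hp, sum_comm]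
  refine sum_congr rfl fun e he => ?_
  have hpe : p.Coprime e :=
    hp.coprime_iff_not_dvd.2 fun h => hpr (h.trans (Nat.dvd_of_mem_divisors he))
  have hμ (i : ℕ) : μ (p ^ i * e) = μ (p ^ i) * μ e :=
    isMultiplicative_moebius.map_mul_of_coprime (hpe.pow_left i)
  have hdiv {i : ℕ} (hi : i ≤ k + 1) :
      p ^ (k + 1) * r / (p ^ i * e) = p ^ (k + 1 - i) * (r / e) := by
    rw [Nat.mul_div_mul_comm (pow_dvd_pow p hi) (Nat.dvd_of_mem_divisors he),
      Nat.pow_div hi hp.pos]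
  rw [sum_range_succ', sum_range_succ', sum_eq_zero fun i _ => by
    rw [hμ, moebius_apply_prime_pow hp (by omega)]; simp]
  rw [hμ, hμ, hdiv (by omega), hdiv (by omega)]
  simp only [pow_zero, zero_add, pow_one, moebius_apply_one, moebius_apply_prime hp,
    Nat.sub_zero, Nat.add_sub_cancel]
  ring

theorem prime_pow_dvd_necklaceSum {p r : ℕ} (hp : p.Prime) (hpr : ¬p ∣ r) (k : ℕ) (x : ℤ) :
    (p : ℤ) ^ (k + 1) ∣ necklaceSum x (p ^ (k + 1) * r) := by
  rw [necklaceSum_prime_pow_mul hp hpr]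
  refine dvd_sum fun e _ => dvd_mul_of_dvd_right ?_ _
  simpa only [pow_mul'] using Int.prime_pow_succ_dvd_pow_sub_pow hp k (x ^ (r / e))

theorem dvd_necklaceSum (x : ℤ) (n : ℕ) : (n : ℤ) ∣ necklaceSum x n := by
  rcases eq_or_ne n 0 with rfl | hn
  · simp [necklaceSum]
  rw [Int.natCast_dvd, Nat.dvd_iff_prime_pow_dvd_dvd]
  intro p k hp hpk
  have hk : k ≤ n.factorization p := (hp.pow_dvd_iff_le_factorization hn).1 hpk
  rcases eq_or_ne k 0 with rfl | hk0
  · exact one_dvd _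
  obtain ⟨v, hv⟩ := Nat.exists_eq_add_one_of_ne_zero (n := n.factorization p) (by omega)
  have hdvd := prime_pow_dvd_necklaceSum hp (Nat.not_dvd_ordCompl hp hn) v x
  rw [← hv, Nat.ordProj_mul_ordCompl_eq_self] at hdvd
  rw [← Int.natCast_dvd, Nat.cast_pow]
  exact (pow_dvd_pow _ (hv ▸ hk)).trans hdvd

theorem necklaceSum_zero_left (n : ℕ) : necklaceSum 0 n = 0 :=
  sum_eq_zero fun d hd => by
    rw [zero_pow (Nat.div_pos (Nat.divisor_le hd) (Nat.pos_of_mem_divisors hd)).ne', mul_zero]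

theorem necklaceSum_one_left (n : ℕ) : necklaceSum 1 n = (1 : ArithmeticFunction ℤ) n := by
  simp [necklaceSum, ← coe_mul_zeta_apply]

theorem necklaceSum_pos {m n : ℕ} (hm : 2 ≤ m) (hn : n ≠ 0) : 0 < necklaceSum m n := by
  have hlead : 2 * (m : ℤ) ^ n ≤ necklaceSum m n + ∑ d ∈ n.divisors, (m : ℤ) ^ (n / d) := by
    rw [necklaceSum, ← sum_add_distrib]
    calc 2 * (m : ℤ) ^ n = μ 1 * (m : ℤ) ^ (n / 1) + (m : ℤ) ^ (n / 1) := by simp [two_mul]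
      _ ≤ _ := by
        refine single_le_sum (f := fun d => μ d * (m : ℤ) ^ (n / d) + (m : ℤ) ^ (n / d))
          (fun d _ => ?_) (Nat.one_mem_divisors.2 hn)
        nlinarith [abs_le.1 (abs_moebius_le_one (n := d)),
          pow_nonneg (Int.natCast_nonneg m) (n / d)]
  have htail : ∑ d ∈ n.divisors, (m : ℤ) ^ (n / d) < 2 * (m : ℤ) ^ n := by
    exact_mod_cast Nat.sum_divisors_pow_div_lt hm hn
  linarith

theorem necklaceSum_nonneg (m n : ℕ) : 0 ≤ necklaceSum m n := by
  rcases eq_or_ne n 0 with rfl | hn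
  · simp [necklaceSum]
  match m with
  | 0 => simp [necklaceSum_zero_left]
  | 1 => simp only [Nat.cast_one, necklaceSum_one_left, one_apply]; split_ifs <;> norm_num
  | m + 2 => exact (necklaceSum_pos (by omega) hn).le

theorem necklace_value_nonneg_integer_general (j m : ℕ) :
    ∃ k : ℕ, (k : ℚ) = (1 / (j : ℚ)) * ∑ d ∈ j.divisors,
      ((ArithmeticFunction.moebius d : ℤ) : ℚ) * (m : ℚ) ^ (j / d) := by
  lift necklaceSum m j to ℕ using necklaceSum_nonneg m j with N hN
  have hdvd : j ∣ N := by exact_mod_cast hN ▸ dvd_necklaceSum m j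
  have hcast : (N : ℚ) = ∑ d ∈ j.divisors, ((μ d : ℤ) : ℚ) * (m : ℚ) ^ (j / d) := by
    rw [← Int.cast_natCast, hN, necklaceSum]
    push_cast
    rfl
  exact ⟨N / j, by rw [Nat.cast_div_charZero hdvd, hcast, one_div_mul_eq_div]⟩

theorem necklace_value_nonneg_integer (j m : ℕ) (hj : 1 ≤ j) :
    ∃ k : ℕ, (k : ℚ) = (1 / (j : ℚ)) * ∑ d ∈ j.divisors,
      ((ArithmeticFunction.moebius d : ℤ) : ℚ) * (m : ℚ) ^ (j / d) :=
  necklace_value_nonneg_integer_general j m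
end

section
/- For every integer n ≥ 2 and every partition λ of n, (z − 1) divides N_λ(z) and N_λ(z)/(z − 1) has degree at most n − 1, so that the rational function ν(z) = N_λ(z) / (z^n − z^{n−1}) is a polynomial in 1/z of degree at most n − 1. -/
open Polynomial Finset

/-- Generalized binomial coefficient C(p, m) = (1/m!) ∏_{k=0}^{m-1} (p - k) in ℚ[z]. -/
noncomputable def genBinom (p : Polynomial ℚ) (m : ℕ) : Polynomial ℚ :=
  Polynomial.C (1 / (Nat.factorial m : ℚ)) * ∏ k ∈ Finset.range m, (p - Polynomial.C (k : ℚ))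

/-- The cycle polynomial N_λ(z) = ∏_j C(M_j(z), m_j(λ)). -/
noncomputable def cyclePoly (n : ℕ) (l : Nat.Partition n) : Polynomial ℚ :=
  ∏ j ∈ Finset.range (n + 1), genBinom (necklace j) (Multiset.count j l.parts)

lemma necklace_natDegree_le (j : ℕ) : (necklace j).natDegree ≤ j := by
  unfold necklace
  refine le_trans (natDegree_mul_le) ?_
  simp only [natDegree_C, zero_add]
  refine le_trans (natDegree_sum_le _ _) ?_
  rw [Finset.fold_max_le]
  refine ⟨Nat.zero_le _, fun d hd => ?_⟩
  refine le_trans (natDegree_mul_le) ?_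
  simp only [natDegree_C, zero_add, natDegree_X_pow]
  exact Nat.div_le_self _ _

lemma genBinom_natDegree_le (j m : ℕ) : (genBinom (necklace j) m).natDegree ≤ j * m := by
  unfold genBinom
  refine le_trans (natDegree_mul_le) ?_
  simp only [natDegree_C, zero_add]
  refine le_trans (natDegree_prod_le _ _) ?_
  calc ∑ k ∈ Finset.range m, (necklace j - Polynomial.C (k : ℚ)).natDegree
      ≤ ∑ _k ∈ Finset.range m, j := by
        refine Finset.sum_le_sum fun k _ => ?_
        refine le_trans (natDegree_sub_le _ _) ?_
        simp [necklace_natDegree_le j]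
    _ = j * m := by simp [mul_comm]

lemma cyclePoly_natDegree_le (n : ℕ) (l : Nat.Partition n) :
    (cyclePoly n l).natDegree ≤ n := by
  unfold cyclePoly
  refine le_trans (natDegree_prod_le _ _) ?_
  calc ∑ j ∈ Finset.range (n + 1), (genBinom (necklace j) (Multiset.count j l.parts)).natDegree
      ≤ ∑ j ∈ Finset.range (n + 1), j * Multiset.count j l.parts :=
        Finset.sum_le_sum fun j _ => genBinom_natDegree_le _ _
    _ = n := by
        have hsub : l.parts.toFinset ⊆ Finset.range (n + 1) := by
          intro a ha
          rw [Multiset.mem_toFinset] at ha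
          rw [Finset.mem_range, Nat.lt_succ_iff]
          calc a ≤ l.parts.sum := Multiset.le_sum_of_mem ha
            _ = n := l.parts_sum
        rw [← Finset.sum_subset hsub (by
          intro x _ hx
          rw [Multiset.mem_toFinset] at hx
          simp [Multiset.count_eq_zero_of_notMem hx])]
        conv_rhs => rw [← l.parts_sum]
        rw [Finset.sum_multiset_count l.parts]
        exact Finset.sum_congr rfl fun a _ => by rw [smul_eq_mul, mul_comm]

lemma necklace_eval_one (j : ℕ) (hj : 2 ≤ j) : (necklace j).eval 1 = 0 := by
  unfold necklace
  simp only [eval_mul, eval_C, eval_finset_sum, eval_mul, eval_C, eval_pow, eval_X, one_pow,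
    mul_one]
  have : ∑ d ∈ j.divisors, ((ArithmeticFunction.moebius d : ℤ) : ℚ) = 0 := by
    have h1 : (∑ d ∈ j.divisors, (ArithmeticFunction.moebius d : ℤ)) = 0 := by
      have := ArithmeticFunction.coe_mul_zeta_apply
        (f := (ArithmeticFunction.moebius : ArithmeticFunction ℤ)) (x := j)
      rw [ArithmeticFunction.moebius_mul_coe_zeta] at this
      rw [← this, ArithmeticFunction.one_apply_ne (by omega)]
    calc ∑ d ∈ j.divisors, ((ArithmeticFunction.moebius d : ℤ) : ℚ)
        = ((∑ d ∈ j.divisors, (ArithmeticFunction.moebius d : ℤ) : ℤ) : ℚ) := by push_cast; rfl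
      _ = 0 := by rw [h1]; rfl
  rw [this, mul_zero]

lemma genBinom_eval_one_ge_two (j m : ℕ) (hj : 2 ≤ j) (hm : 1 ≤ m) :
    (genBinom (necklace j) m).eval 1 = 0 := by
  unfold genBinom
  rw [eval_mul, eval_prod]
  rw [Finset.prod_eq_zero (Finset.mem_range.mpr (Nat.lt_of_lt_of_le Nat.zero_lt_one hm))]
  · ring
  · simp [necklace_eval_one j hj]

lemma necklace_one : necklace 1 = Polynomial.X := by
  unfold necklace
  simp [Nat.divisors_one]

lemma cyclePoly_eval_one (n : ℕ) (hn : 2 ≤ n) (l : Nat.Partition n) :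
    (cyclePoly n l).eval 1 = 0 := by
  unfold cyclePoly
  rw [eval_prod]
  by_cases h : ∃ j ∈ Finset.range (n + 1), 2 ≤ j ∧ 1 ≤ Multiset.count j l.parts
  · obtain ⟨j, hj, hj2, hjm⟩ := h
    exact Finset.prod_eq_zero hj (genBinom_eval_one_ge_two j _ hj2 hjm)
  · -- all parts are 1, so count 1 = n ≥ 2
    push_neg at h
    have hall : ∀ a ∈ l.parts, a = 1 := by
      intro a ha
      have h1 : 1 ≤ a := l.parts_pos ha
      have h2 : a ≤ n := by
        calc a ≤ l.parts.sum := Multiset.le_sum_of_mem ha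
          _ = n := l.parts_sum
      by_contra hne
      have h2a : 2 ≤ a := by omega
      have := h a (Finset.mem_range.mpr (by omega)) h2a
      rw [Nat.lt_one_iff, Multiset.count_eq_zero] at this
      exact this ha
    have hrep : l.parts = Multiset.replicate (Multiset.card l.parts) 1 :=
      Multiset.eq_replicate_card.mpr fun a ha => hall a ha
    have hcard : Multiset.card l.parts = n := by
      have hs := l.parts_sum
      rw [hrep, Multiset.sum_replicate, smul_eq_mul, mul_one] at hs
      exact hs
    have hcount : Multiset.count 1 l.parts = n := by
      rw [hrep, Multiset.count_replicate, if_pos rfl, hcard]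
    refine Finset.prod_eq_zero (i := 1) (Finset.mem_range.mpr (by omega)) ?_
    rw [hcount]
    unfold genBinom
    rw [eval_mul, eval_prod]
    rw [Finset.prod_eq_zero (i := 1) (Finset.mem_range.mpr (by omega))]
    · ring
    · simp [necklace_one]

theorem splitting_measure_laurent_poly (n : ℕ) (hn : 2 ≤ n) (l : Nat.Partition n) :
    ∃ p : Polynomial ℚ, cyclePoly n l = (Polynomial.X - 1) * p ∧ p.natDegree ≤ n - 1 := by
  have hroot : (Polynomial.X - 1 : Polynomial ℚ) ∣ cyclePoly n l := by
    have := cyclePoly_eval_one n hn l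
    have h1 : (Polynomial.X - Polynomial.C (1 : ℚ)) ∣ cyclePoly n l :=
      dvd_iff_isRoot.mpr this
    simpa using h1
  obtain ⟨p, hp⟩ := hroot
  refine ⟨p, hp, ?_⟩
  by_cases hp0 : p = 0
  · simp [hp0]
  · have hne : (Polynomial.X - 1 : Polynomial ℚ) ≠ 0 := by
      intro h
      have := congrArg (Polynomial.eval 0) h
      simp at this
    have hdeg : (cyclePoly n l).natDegree = 1 + p.natDegree := by
      rw [hp, natDegree_mul hne hp0]
      congr 1
      have : (Polynomial.X - 1 : Polynomial ℚ) = Polynomial.X - Polynomial.C 1 := by simp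
      rw [this, natDegree_X_sub_C]
    have := cyclePoly_natDegree_le n l
    omega
end

section
/- For every integer n ≥ 2 and every integer m ≥ 1, ∑_{k=0}^{n−1} a_k m^k = ∏_{j=2}^{n−1}(1 + j·m), where a_k = ∑_{i=0}^{k} (−1)^i s(n, n − k + i) and s denotes unsigned Stirling numbers of the first kind; moreover each a_k is a nonnegative integer. -/
open Polynomial Finset

/-- Unsigned Stirling numbers of the first kind: ∏_{k=0}^{n-1}(x+k) = ∑_j stirFirst n j · x^j. -/
def stirFirst : ℕ → ℕ → ℕ
  | 0, 0 => 1
  | 0, _ + 1 => 0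
  | _ + 1, 0 => 0
  | n + 1, k + 1 => stirFirst n k + n * stirFirst n (k + 1)

def D : ℕ → ℕ → ℕ
  | 0, _ => 0
  | 1, _ => 0
  | 2, j => if j = 1 then 1 else 0
  | n+3, 0 => (n+2) * D (n+2) 0
  | n+3, j+1 => D (n+2) j + (n+2) * D (n+2) (j+1)

lemma D_zero : ∀ n, D n 0 = 0
  | 0 => rfl
  | 1 => rfl
  | 2 => rfl
  | n+3 => by rw [show D (n+3) 0 = (n+2) * D (n+2) 0 from rfl, D_zero (n+2), Nat.mul_zero]

lemma D_top : ∀ n j, D n (n + j) = 0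
  | 0, j => rfl
  | 1, j => rfl
  | 2, j => by
    show (if 2 + j = 1 then 1 else 0) = 0
    rw [if_neg (by omega)]
  | n+3, j => by
    have h : n+3+j = (n+2+j)+1 := by omega
    rw [h, show D (n+3) ((n+2+j)+1) = D (n+2) (n+2+j) + (n+2) * D (n+2) (n+2+j+1) from rfl,
      D_top (n+2) j, show n+2+j+1 = n+2+(j+1) from rfl, D_top (n+2) (j+1), Nat.mul_zero]

lemma stir_gt : ∀ n j, stirFirst n (n + j + 1) = 0
  | 0, j => rfl
  | n+1, j => by
    show stirFirst n (n+1+j) + n * stirFirst n (n+1+j+1) = 0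
    rw [show n+1+j = n+j+1 from by omega, stir_gt n j,
      show n+j+1+1 = n+(j+1)+1 from by omega, stir_gt n (j+1), Nat.mul_zero]

lemma stir_eq_D : ∀ m j, stirFirst (m+2) (j+1) = D (m+2) j + D (m+2) (j+1)
  | 0, 0 => by decide
  | 0, 1 => by decide
  | 0, j+2 => by
    have : (2:ℕ)+j+1 = j+3 := by omega
    rw [show j+2+1 = 2+j+1 from by omega, stir_gt 2 j]
    simp [D]
  | m+1, 0 => by
    show stirFirst (m+2) 0 + (m+2) * stirFirst (m+2) 1 = D (m+3) 0 + D (m+3) 1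
    rw [show stirFirst (m+2) 0 = 0 from rfl, stir_eq_D m 0,
      show D (m+3) 0 = (m+2) * D (m+2) 0 from rfl,
      show D (m+3) 1 = D (m+2) 0 + (m+2) * D (m+2) 1 from rfl, D_zero]
    ring
  | m+1, j+1 => by
    show stirFirst (m+2) (j+1) + (m+2) * stirFirst (m+2) (j+2) = D (m+3) (j+1) + D (m+3) (j+2)
    rw [stir_eq_D m j, stir_eq_D m (j+1),
      show D (m+3) (j+1) = D (m+2) j + (m+2) * D (m+2) (j+1) from rfl,
      show D (m+3) (j+2) = D (m+2) (j+1) + (m+2) * D (m+2) (j+2) from rfl]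
    ring

lemma alt_sum (t : ℕ) : ∀ k ≤ t+1,
    ∑ i ∈ Finset.range (k+1), (-1:ℚ)^i * (stirFirst (t+2) (t+2-k+i) : ℚ)
      = (D (t+2) (t+1-k) : ℚ) := by
  intro k
  induction k with
  | zero =>
    intro _
    rw [Finset.sum_range_one, pow_zero, one_mul, show t+2-0+0 = (t+1)+1 from by omega,
      stir_eq_D t (t+1), show t+1+1 = t+2 from rfl,
      show D (t+2) (t+2) = 0 from by simpa using D_top (t+2) 0,
      Nat.add_zero, show t+1-0 = t+1 from rfl]
  | succ k ih =>
    intro hk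
    rw [Finset.sum_range_succ']
    have e1 : ∀ i : ℕ, t+2-(k+1)+(i+1) = t+2-k+i := by intro i; omega
    have e2 : t+2-(k+1)+0 = (t-k)+1 := by omega
    have e3 : t+1-k = (t-k)+1 := by omega
    have : ∑ i ∈ Finset.range (k+1), (-1:ℚ)^(i+1) * (stirFirst (t+2) (t+2-(k+1)+(i+1)) : ℚ)
        = -∑ i ∈ Finset.range (k+1), (-1:ℚ)^i * (stirFirst (t+2) (t+2-k+i) : ℚ) := by
      rw [← Finset.sum_neg_distrib]
      refine Finset.sum_congr rfl fun i _ => ?_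
      rw [e1 i]; ring
    rw [this, ih (by omega), e2, stir_eq_D t (t-k), e3]
    push_cast
    ring

lemma prod_D (x : ℚ) : ∀ t, ∑ k ∈ Finset.range (t+2), (D (t+2) (t+1-k) : ℚ) * x^k
    = ∏ j ∈ Finset.Icc 2 (t+1), (1 + (j:ℚ) * x) := by
  intro t
  induction t with
  | zero => norm_num [D, Finset.sum_range_succ]
  | succ t ih =>
    rw [Finset.sum_range_succ]
    have e0 : t+2-(t+2) = 0 := by omega
    have hD0 : D (t+3) 0 = 0 := D_zero _
    have key : ∀ k ∈ Finset.range (t+2),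
        (D (t+3) (t+2-k) : ℚ) * x^k
          = (D (t+2) (t+1-k) : ℚ) * x^k + (t+2) * ((D (t+2) (t+2-k) : ℚ) * x^k) := by
      intro k hk
      rw [Finset.mem_range] at hk
      have : t+2-k = (t+1-k)+1 := by omega
      rw [this, show D (t+3) ((t+1-k)+1) = D (t+2) (t+1-k) + (t+2) * D (t+2) ((t+1-k)+1) from rfl,
        ← this]
      push_cast
      ring
    rw [Finset.sum_congr rfl key, Finset.sum_add_distrib, ← Finset.mul_sum, e0, hD0]
    have htop : D (t+2) (t+2) = 0 := by simpa using D_top (t+2) 0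
    have shift : ∑ k ∈ Finset.range (t+2), (D (t+2) (t+2-k) : ℚ) * x^k
        = x * ∑ k ∈ Finset.range (t+2), (D (t+2) (t+1-k) : ℚ) * x^k := by
      have h1 : ∑ k ∈ Finset.range (t+2), (D (t+2) (t+2-k) : ℚ) * x^k
          = (∑ k ∈ Finset.range (t+1), (D (t+2) (t+2-(k+1)) : ℚ) * x^(k+1))
            + (D (t+2) (t+2-0) : ℚ) * x^0 := Finset.sum_range_succ' _ _
      have h2 : ∑ k ∈ Finset.range (t+2), (D (t+2) (t+1-k) : ℚ) * x^k
          = ∑ k ∈ Finset.range (t+1), (D (t+2) (t+1-k) : ℚ) * x^k := by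
        rw [Finset.sum_range_succ, show t+1-(t+1) = 0 from by omega, D_zero]
        push_cast; ring
      rw [h1, show t+2-0 = t+2 from rfl, htop, h2, Finset.mul_sum]
      push_cast
      rw [zero_mul, add_zero]
      refine Finset.sum_congr rfl fun k hk => ?_
      rw [Finset.mem_range] at hk
      ring
    rw [shift, ih]
    rw [show t+1+1 = t+2 from rfl, Finset.prod_Icc_succ_top (by omega : 2 ≤ t+2)]
    push_cast
    ring

theorem dim_Bnm (n m : ℕ) (hn : 2 ≤ n) (hm : 1 ≤ m) :
    (∑ k ∈ Finset.range n,
        (∑ i ∈ Finset.range (k + 1), (-1 : ℚ) ^ i * (stirFirst n (n - k + i) : ℚ)) * (m : ℚ) ^ k) =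
      ∏ j ∈ Finset.Icc 2 (n - 1), (1 + (j : ℚ) * (m : ℚ)) ∧
    ∀ k ≤ n - 1, ∃ a : ℕ,
      (a : ℚ) = ∑ i ∈ Finset.range (k + 1), (-1 : ℚ) ^ i * (stirFirst n (n - k + i) : ℚ) := by
  obtain ⟨t, rfl⟩ : ∃ t, n = t + 2 := ⟨n - 2, by omega⟩
  constructor
  · have : ∀ k ∈ Finset.range (t+2),
        (∑ i ∈ Finset.range (k + 1), (-1 : ℚ) ^ i * (stirFirst (t+2) (t+2 - k + i) : ℚ)) * (m : ℚ) ^ k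
          = (D (t+2) (t+1-k) : ℚ) * (m:ℚ)^k := by
      intro k hk
      rw [Finset.mem_range] at hk
      rw [alt_sum t k (by omega)]
    rw [Finset.sum_congr rfl this, prod_D (m:ℚ) t, show t+2-1 = t+1 from rfl]
  · intro k hk
    exact ⟨D (t+2) (t+1-k), (alt_sum t k (by omega)).symm⟩
end
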